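/- Assume for every finite graph G, set A ⊆ G, vertices 0, b, the following gluing property: if a is the minimiser of P_G(a'↔b) over a'∈A, {v,w} is an edge, and P_G(x↔b) ≥ P_G(x↔A)·P_G(a↔b) for both x∈{v,w}, then P_{G⋒{v,w}}(v↔b) ≥ P_{G⋒{v,w}}(v↔A)·P_{G⋒{v,w}}(a↔b). Then for every finite graph G, set A, vertices 0, b: P_G(0↔b) ≥ P_G(0↔A)·min_{a∈A} P_G(a↔b). -/

import Mathlib

open scoped BigOperators

structure PercGraph (V E : Type) where
  ends : E → V × V
  p : E → ℝ

namespace PercGraph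

variable {V E : Type} [DecidableEq V] [Fintype E] [DecidableEq E]

/-- Weight of a configuration: each edge `e` is open (`ω e = true`) with probability `p e`. -/
def weight (G : PercGraph V E) (ω : E → Bool) : ℝ :=
  ∏ e, if ω e then G.p e else 1 - G.p e

/-- Probability of an event under the percolation measure. -/
noncomputable def prob (G : PercGraph V E) (S : Set (E → Bool)) : ℝ :=
  ∑ ω : E → Bool, Set.indicator S G.weight ω

/-- Expectation of a function under the percolation measure. -/
noncomputable def expec (G : PercGraph V E) (f : (E → Bool) → ℝ) : ℝ :=
  ∑ ω : E → Bool, f ω * G.weight ω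

/-- Two vertices are adjacent via an open edge in configuration `ω`. -/
def adj (G : PercGraph V E) (ω : E → Bool) (x y : V) : Prop :=
  ∃ e, ω e = true ∧ (G.ends e = (x, y) ∨ G.ends e = (y, x))

/-- `x` and `y` are connected by a path of open edges. -/
def Conn (G : PercGraph V E) (ω : E → Bool) (x y : V) : Prop :=
  Relation.ReflTransGen (G.adj ω) x y

/-- The union of the open clusters of the vertices of `A`. -/
def cluster (G : PercGraph V E) (ω : E → Bool) (A : Set V) : Set V :=
  {y | ∃ a ∈ A, G.Conn ω a y}

/-- The event `x ↔ y`. -/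
def connEvent (G : PercGraph V E) (x y : V) : Set (E → Bool) :=
  {ω | G.Conn ω x y}

/-- The event `x ↔ A`. -/
def connTo (G : PercGraph V E) (x : V) (A : Set V) : Set (E → Bool) :=
  {ω | ∃ a ∈ A, G.Conn ω x a}

/-- The event `A ↮ B`. -/
def disconn (G : PercGraph V E) (A B : Set V) : Set (E → Bool) :=
  {ω | ∀ a ∈ A, ∀ b ∈ B, ¬ G.Conn ω a b}

def IncreasingEvent (S : Set (E → Bool)) : Prop :=
  ∀ ⦃ω ω' : E → Bool⦄, (∀ e, ω e = true → ω' e = true) → ω ∈ S → ω' ∈ S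

def DecreasingEvent (S : Set (E → Bool)) : Prop :=
  ∀ ⦃ω ω' : E → Bool⦄, (∀ e, ω e = true → ω' e = true) → ω' ∈ S → ω ∈ S

def IncreasingFun (f : (E → Bool) → ℝ) : Prop :=
  ∀ ⦃ω ω' : E → Bool⦄, (∀ e, ω e = true → ω' e = true) → f ω ≤ f ω'

/-- `f` is determined by the cluster of `A`. -/
def ClusterDetermined (G : PercGraph V E) (A : Set V) (f : (E → Bool) → ℝ) : Prop :=
  ∀ ω ω', G.cluster ω A = G.cluster ω' A → f ω = f ω'

/-- The event `S` is determined by the cluster of `A`. -/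
def ClusterDeterminedEvent (G : PercGraph V E) (A : Set V) (S : Set (E → Bool)) : Prop :=
  ∀ ω ω', G.cluster ω A = G.cluster ω' A → (ω ∈ S ↔ ω' ∈ S)

noncomputable def condProb (G : PercGraph V E) (S T : Set (E → Bool)) : ℝ :=
  G.prob (S ∩ T) / G.prob T

noncomputable def condExpec (G : PercGraph V E) (f : (E → Bool) → ℝ) (T : Set (E → Bool)) : ℝ :=
  G.expec (T.indicator f) / G.prob T

/-- The edge `e` is incident to the vertex `x`. -/
def incident (G : PercGraph V E) (x : V) (e : E) : Prop :=
  (G.ends e).1 = x ∨ (G.ends e).2 = x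

/-- The other endpoint of an edge incident to `x`. -/
def otherEnd (G : PercGraph V E) (x : V) (e : E) : V :=
  if (G.ends e).1 = x then (G.ends e).2 else (G.ends e).1

/-- The graph `G ∖ W`: delete the vertices of `W` and all incident edges. -/
def delete (G : PercGraph V E) (W : Finset V) :
    PercGraph V {e : E // (G.ends e).1 ∉ W ∧ (G.ends e).2 ∉ W} :=
  ⟨fun e => G.ends e.1, fun e => G.p e.1⟩

/-- The graph `G` with the probability of edge `e` replaced by `q`. -/
def withEdgeProb (G : PercGraph V E) (e : E) (q : ℝ) : PercGraph V E :=
  ⟨G.ends, Function.update G.p e q⟩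

/-- Contraction of the edge `e`: set its probability to 1. -/
def contract (G : PercGraph V E) (e : E) : PercGraph V E :=
  G.withEdgeProb e 1

/-- The event that `e` is pivotal for `U`. -/
def pivotal (e : E) (U : Set (E → Bool)) : Set (E → Bool) :=
  {ω | ¬ ((Function.update ω e true ∈ U) ↔ (Function.update ω e false ∈ U))}

/-- All edge probabilities lie in `[0,1]`. -/
def ProbValid (G : PercGraph V E) : Prop := ∀ e, 0 ≤ G.p e ∧ G.p e ≤ 1

end PercGraph

/-!
Induct on the number of edges of positive probability. Pick an edge `e` at `x₀` with
`p e > 0` and let `a` minimise `P(a ↔ b)` in the graph with `p e` set to `0`. All probabilities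
involved are affine in `p e`, and `P(x₀ ↔ A)`, `P(a ↔ b)` are nondecreasing in it, so
`P(x₀ ↔ b) - P(x₀ ↔ A) P(a ↔ b)` is concave in `p e`. It is nonnegative at `p e = 0` by
induction, and at `p e = 1` by the gluing property applied to the graph with `p e = 0`, whose
hypotheses are again instances of the induction hypothesis.
-/

lemma convexCombo_mul_convexCombo_le {t c₀ c₁ d₀ d₁ b₀ b₁ : ℝ} (ht₀ : 0 ≤ t) (ht₁ : t ≤ 1)
    (hc : c₀ ≤ c₁) (hd : d₀ ≤ d₁) (h₀ : c₀ * d₀ ≤ b₀) (h₁ : c₁ * d₁ ≤ b₁) :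
    ((1 - t) * c₀ + t * c₁) * ((1 - t) * d₀ + t * d₁) ≤ (1 - t) * b₀ + t * b₁ := by
  have key : ((1 - t) * c₀ + t * c₁) * ((1 - t) * d₀ + t * d₁) =
      (1 - t) * (c₀ * d₀) + t * (c₁ * d₁) - t * (1 - t) * ((c₁ - c₀) * (d₁ - d₀)) := by ring
  have hcross : 0 ≤ t * (1 - t) * ((c₁ - c₀) * (d₁ - d₀)) :=
    mul_nonneg (mul_nonneg ht₀ (sub_nonneg.mpr ht₁))
      (mul_nonneg (sub_nonneg.mpr hc) (sub_nonneg.mpr hd))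
  rw [key]
  linarith [mul_le_mul_of_nonneg_left h₀ (sub_nonneg.mpr ht₁), mul_le_mul_of_nonneg_left h₁ ht₀]

namespace PercGraph

open Finset

variable {V E : Type}

lemma conn_mono (G : PercGraph V E) {ω ω' : E → Bool} (hle : ∀ e, ω e = true → ω' e = true)
    {x y : V} (h : G.Conn ω x y) : G.Conn ω' x y :=
  Relation.ReflTransGen.mono (r := G.adj ω) (p := G.adj ω')
    (fun _ _ ⟨e, he, hends⟩ => ⟨e, hle e he, hends⟩) x y h

lemma increasingEvent_connEvent (G : PercGraph V E) (x y : V) :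
    IncreasingEvent (G.connEvent x y) :=
  fun _ _ hle h => G.conn_mono hle h

lemma increasingEvent_connTo (G : PercGraph V E) (x : V) (A : Set V) :
    IncreasingEvent (G.connTo x A) :=
  fun _ _ hle ⟨a, ha, h⟩ => ⟨a, ha, G.conn_mono hle h⟩

lemma conn_iff_of_open_edge (G : PercGraph V E) {e : E} {v w : V} (hends : G.ends e = (v, w))
    {ω : E → Bool} (hω : ω e = true) (y : V) : G.Conn ω w y ↔ G.Conn ω v y :=
  ⟨.head ⟨e, hω, .inl hends⟩, .head ⟨e, hω, .inr hends⟩⟩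

section EdgeProb

variable [DecidableEq E]

lemma probValid_withEdgeProb {G : PercGraph V E} (hV : G.ProbValid) (e : E) {t : ℝ}
    (ht₀ : 0 ≤ t) (ht₁ : t ≤ 1) : (G.withEdgeProb e t).ProbValid := fun e' => by
  by_cases h : e' = e
  · subst h; simpa [withEdgeProb] using ⟨ht₀, ht₁⟩
  · simpa [withEdgeProb, h] using hV e'

lemma withEdgeProb_self (G : PercGraph V E) (e : E) : G.withEdgeProb e (G.p e) = G := by
  simp [withEdgeProb]

lemma contract_withEdgeProb (G : PercGraph V E) (e : E) (t : ℝ) :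
    (G.withEdgeProb e t).contract e = G.contract e := by
  simp [contract, withEdgeProb]

end EdgeProb

variable [Fintype E]

lemma weight_nonneg {G : PercGraph V E} (hV : G.ProbValid) (ω : E → Bool) : 0 ≤ G.weight ω :=
  prod_nonneg fun e _ => by
    cases ω e
    · exact sub_nonneg.mpr (hV e).2
    · exact (hV e).1

variable [DecidableEq E]

lemma sum_weight (G : PercGraph V E) : ∑ ω, G.weight ω = 1 := by
  have h := prod_univ_sum (fun _ : E => (univ : Finset Bool))
    (fun e b => if b then G.p e else 1 - G.p e)
  rw [Fintype.piFinset_univ] at h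
  unfold weight
  rw [← h]
  exact prod_eq_one fun e _ => by simp

lemma prob_nonneg {G : PercGraph V E} (hV : G.ProbValid) (S : Set (E → Bool)) : 0 ≤ G.prob S :=
  sum_nonneg fun ω _ => Set.indicator_nonneg (fun ω _ => weight_nonneg hV ω) ω

lemma prob_le_one {G : PercGraph V E} (hV : G.ProbValid) (S : Set (E → Bool)) : G.prob S ≤ 1 :=
  G.sum_weight ▸ sum_le_sum fun ω _ =>
    Set.indicator_le_self' (fun ω _ => weight_nonneg hV ω) ω

lemma prob_mono_on {G : PercGraph V E} (hV : G.ProbValid) {S T : Set (E → Bool)}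
    (h : ∀ ω, G.weight ω ≠ 0 → ω ∈ S → ω ∈ T) : G.prob S ≤ G.prob T := by
  classical
  unfold prob
  refine sum_le_sum fun ω _ => ?_
  by_cases hω : G.weight ω = 0
  · simp [Set.indicator_apply, hω]
  by_cases hS : ω ∈ S
  · rw [Set.indicator_of_mem hS, Set.indicator_of_mem (h ω hω hS)]
  · rw [Set.indicator_of_notMem hS]
    exact Set.indicator_nonneg (fun ω _ => weight_nonneg hV ω) ω

lemma prob_congr_on {G : PercGraph V E} {S T : Set (E → Bool)}
    (h : ∀ ω, G.weight ω ≠ 0 → (ω ∈ S ↔ ω ∈ T)) : G.prob S = G.prob T := by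
  classical
  unfold prob
  refine sum_congr rfl fun ω _ => ?_
  by_cases hω : G.weight ω = 0
  · simp [Set.indicator_apply, hω]
  · simp only [Set.indicator_apply, h ω hω]

lemma weight_withEdgeProb (G : PercGraph V E) (e : E) (t : ℝ) (ω : E → Bool) :
    (G.withEdgeProb e t).weight ω =
      (if ω e then t else 1 - t) * ∏ e' ∈ univ.erase e, if ω e' then G.p e' else 1 - G.p e' := by
  rw [weight, ← mul_prod_erase _ _ (mem_univ e)]
  congr 1
  · simp [withEdgeProb]
  · exact prod_congr rfl fun e' he' => by simp [withEdgeProb, ne_of_mem_erase he']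

lemma weight_withEdgeProb_eq (G : PercGraph V E) (e : E) (t : ℝ) (ω : E → Bool) :
    (G.withEdgeProb e t).weight ω =
      (1 - t) * (G.withEdgeProb e 0).weight ω + t * (G.contract e).weight ω := by
  simp only [contract, weight_withEdgeProb]
  cases ω e <;> simp

lemma prob_eq_withEdgeProb_add_contract (G : PercGraph V E) (e : E) (S : Set (E → Bool)) :
    G.prob S = (1 - G.p e) * (G.withEdgeProb e 0).prob S + G.p e * (G.contract e).prob S := by
  classical
  conv_lhs => rw [← G.withEdgeProb_self e]
  simp only [prob, mul_sum, ← sum_add_distrib]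
  refine sum_congr rfl fun ω _ => ?_
  simp only [Set.indicator_apply]
  split_ifs
  · exact weight_withEdgeProb_eq G e _ ω
  · ring

lemma eq_true_of_weight_contract_ne_zero {G : PercGraph V E} {e : E} {ω : E → Bool}
    (hω : (G.contract e).weight ω ≠ 0) : ω e = true := by
  by_contra h
  simp [contract, weight_withEdgeProb, h] at hω

lemma weight_withEdgeProb_zero_flip (G : PercGraph V E) (e : E) (ω : E → Bool) :
    (G.withEdgeProb e 0).weight (Function.update ω e (!ω e)) = (G.contract e).weight ω := by
  simp only [contract, weight_withEdgeProb, Function.update_self]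
  congr 1
  · cases ω e <;> simp
  · exact prod_congr rfl fun e' he' => by rw [Function.update_of_ne (ne_of_mem_erase he')]

lemma prob_withEdgeProb_zero_eq (G : PercGraph V E) (e : E) (S : Set (E → Bool)) :
    (G.withEdgeProb e 0).prob S =
      (G.contract e).prob ((fun ω => Function.update ω e (!ω e)) ⁻¹' S) := by
  classical
  have hflip : Function.Involutive fun ω : E → Bool => Function.update ω e (!ω e) := fun ω => by
    simp
  rw [prob, ← Equiv.sum_comp hflip.toPerm]
  refine sum_congr rfl fun ω _ => ?_
  simp only [Set.indicator_apply, Set.mem_preimage, Function.Involutive.coe_toPerm,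
    weight_withEdgeProb_zero_flip]

lemma IncreasingEvent.prob_withEdgeProb_zero_le_contract {G : PercGraph V E} (hV : G.ProbValid)
    (e : E) {S : Set (E → Bool)} (hS : IncreasingEvent S) :
    (G.withEdgeProb e 0).prob S ≤ (G.contract e).prob S := by
  rw [prob_withEdgeProb_zero_eq]
  refine prob_mono_on (probValid_withEdgeProb hV e zero_le_one le_rfl) fun ω hω => hS fun e' => ?_
  by_cases h : e' = e
  · subst h; simp [eq_true_of_weight_contract_ne_zero hω]
  · simp [Function.update_of_ne h]

/-- `P(U) - P(S) P(T)` is concave in the probability of `e`: it is affine minus a product of two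
nondecreasing affine functions. -/
lemma prob_mul_prob_le_of_withEdgeProb_zero_of_contract {G : PercGraph V E} (hV : G.ProbValid)
    (e : E) {S T U : Set (E → Bool)} (hS : IncreasingEvent S) (hT : IncreasingEvent T)
    (h₀ : (G.withEdgeProb e 0).prob S * (G.withEdgeProb e 0).prob T ≤
      (G.withEdgeProb e 0).prob U)
    (h₁ : (G.contract e).prob S * (G.contract e).prob T ≤ (G.contract e).prob U) :
    G.prob S * G.prob T ≤ G.prob U := by
  simp only [prob_eq_withEdgeProb_add_contract G e]
  exact convexCombo_mul_convexCombo_le (hV e).1 (hV e).2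
    (hS.prob_withEdgeProb_zero_le_contract hV e) (hT.prob_withEdgeProb_zero_le_contract hV e) h₀ h₁

lemma prob_connTo_eq_zero {G : PercGraph V E} (hV : G.ProbValid) {x : V} {A : Set V}
    (hx : x ∉ A) (hiso : ∀ e, G.incident x e → G.p e = 0) : G.prob (G.connTo x A) = 0 := by
  refine le_antisymm ?_ (prob_nonneg hV _)
  calc G.prob (G.connTo x A) ≤ G.prob ∅ := prob_mono_on hV fun ω hω ⟨a, ha, hconn⟩ => ?_
    _ = 0 := by simp [prob]
  rcases hconn.cases_head with rfl | ⟨_, ⟨e, he, hends⟩, -⟩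
  · exact hx ha
  · refine hω (prod_eq_zero (mem_univ e) ?_)
    have : G.incident x e := by rcases hends with h | h <;> simp [incident, h]
    simp [he, hiso e this]

def PostFKGAt (G : PercGraph V E) (A : Set V) (a b x : V) : Prop :=
  G.prob (G.connTo x A) * G.prob (G.connEvent a b) ≤ G.prob (G.connEvent x b)

lemma PostFKGAt.contract_snd {G : PercGraph V E} {e : E} {v w : V} (hends : G.ends e = (v, w))
    {A : Set V} {a b : V} (h : (G.contract e).PostFKGAt A a b v) :
    (G.contract e).PostFKGAt A a b w := by
  have hb : (G.contract e).prob ((G.contract e).connEvent w b) =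
      (G.contract e).prob ((G.contract e).connEvent v b) :=
    prob_congr_on fun ω hω =>
      G.conn_iff_of_open_edge hends (eq_true_of_weight_contract_ne_zero hω) b
  have hA : (G.contract e).prob ((G.contract e).connTo w A) =
      (G.contract e).prob ((G.contract e).connTo v A) :=
    prob_congr_on fun ω hω => exists_congr fun a' => and_congr_right fun _ =>
      G.conn_iff_of_open_edge hends (eq_true_of_weight_contract_ne_zero hω) a'
  unfold PostFKGAt
  rwa [hA, hb]

def GluingProperty : Prop :=
  ∀ (V E : Type) [DecidableEq V] [Fintype E] [DecidableEq E]
    (G : PercGraph V E), G.ProbValid → ∀ (A : Finset V), A.Nonempty →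
    ∀ (b v w : V) (e : E), G.ends e = (v, w) →
    ∀ a ∈ A, (∀ a' ∈ A, G.prob (G.connEvent a b) ≤ G.prob (G.connEvent a' b)) →
    (∀ x ∈ ({v, w} : Set V), G.PostFKGAt A a b x) → (G.contract e).PostFKGAt A a b v

lemma postFKGAt_contract_of_incident (H : GluingProperty) {G : PercGraph V E}
    (hV : G.ProbValid) {A : Finset V} (hA : A.Nonempty) {a b x : V} {e : E}
    (hinc : G.incident x e) (ha : a ∈ A)
    (hmin : ∀ a' ∈ A, (G.withEdgeProb e 0).prob (G.connEvent a b) ≤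
      (G.withEdgeProb e 0).prob (G.connEvent a' b))
    (h₀ : ∀ y, (G.withEdgeProb e 0).PostFKGAt A a b y) : (G.contract e).PostFKGAt A a b x := by
  classical
  rcases hvw : G.ends e with ⟨v, w⟩
  have hglue := H V E (G.withEdgeProb e 0) (probValid_withEdgeProb hV e le_rfl zero_le_one)
    A hA b v w e hvw a ha hmin fun y _ => h₀ y
  rw [contract_withEdgeProb] at hglue
  rcases hinc with h | h <;> rw [hvw] at h <;> subst h
  · exact hglue
  · exact hglue.contract_snd hvw

noncomputable def posEdges (G : PercGraph V E) : Finset E := univ.filter fun e => G.p e ≠ 0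

lemma card_posEdges_withEdgeProb_zero_lt {G : PercGraph V E} {e : E} (he : G.p e ≠ 0) :
    (G.withEdgeProb e 0).posEdges.card < G.posEdges.card := by
  have hp (e' : E) : (G.withEdgeProb e 0).p e' = if e' = e then 0 else G.p e' :=
    Function.update_apply ..
  refine card_lt_card ⟨fun e' he' => ?_, fun hsub => ?_⟩
  · rw [posEdges, mem_filter, hp] at he'
    rw [posEdges, mem_filter]
    split_ifs at he' <;> tauto
  · have := hsub (mem_filter.mpr ⟨mem_univ e, he⟩)
    rw [posEdges, mem_filter, hp, if_pos rfl] at this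
    exact this.2 rfl

theorem postFKG_of_gluingProperty (H : GluingProperty) (G : PercGraph V E) (hV : G.ProbValid)
    (A : Finset V) (hA : A.Nonempty) (x b : V) :
    G.prob (G.connTo x ↑A) * A.inf' hA (fun a => G.prob (G.connEvent a b))
      ≤ G.prob (G.connEvent x b) := by
  by_cases hxA : x ∈ A
  · calc _ ≤ 1 * A.inf' hA (fun a => G.prob (G.connEvent a b)) :=
          mul_le_mul_of_nonneg_right (prob_le_one hV _)
            (le_inf' hA _ fun a _ => prob_nonneg hV _)
      _ ≤ _ := (one_mul _).trans_le (inf'_le _ hxA)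
  by_cases hiso : ∀ e, G.incident x e → G.p e = 0
  · rw [prob_connTo_eq_zero hV (by exact_mod_cast hxA) hiso, zero_mul]
    exact prob_nonneg hV _
  push Not at hiso
  obtain ⟨e, hinc, hpe⟩ := hiso
  obtain ⟨a, ha, hmin⟩ := A.exists_mem_eq_inf' hA fun a =>
    (G.withEdgeProb e 0).prob ((G.withEdgeProb e 0).connEvent a b)
  have h₀ (y : V) : (G.withEdgeProb e 0).PostFKGAt A a b y := by
    have := postFKG_of_gluingProperty H (G.withEdgeProb e 0)
      (probValid_withEdgeProb hV e le_rfl zero_le_one) A hA y b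
    rwa [hmin] at this
  have h₁ := postFKGAt_contract_of_incident H hV hA hinc ha
    (fun a' ha' => hmin ▸ inf'_le _ ha') h₀
  calc _ ≤ G.prob (G.connTo x ↑A) * G.prob (G.connEvent a b) :=
        mul_le_mul_of_nonneg_left (inf'_le _ ha) (prob_nonneg hV _)
    _ ≤ _ := prob_mul_prob_le_of_withEdgeProb_zero_of_contract hV e
      (G.increasingEvent_connTo x A) (G.increasingEvent_connEvent a b) (h₀ x) h₁
termination_by G.posEdges.card
decreasing_by exact card_posEdges_withEdgeProb_zero_lt hpe

end PercGraph

/-- if the gluing (contraction) property holds for all finite graphs,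
then the post-FKG conjecture `P(0↔b) ≥ P(0↔A)·min_{a∈A} P(a↔b)` holds for all
finite graphs. -/
theorem postFKG_of_gluing
    (H : ∀ (V E : Type) [DecidableEq V] [Fintype E] [DecidableEq E]
        (G : PercGraph V E), G.ProbValid → ∀ (A : Finset V), A.Nonempty →
        ∀ (b v w : V) (e : E), G.ends e = (v, w) →
        ∀ a ∈ A, (∀ a' ∈ A, G.prob (G.connEvent a b) ≤ G.prob (G.connEvent a' b)) →
        (∀ x ∈ ({v, w} : Set V),
            G.prob (G.connTo x ↑A) * G.prob (G.connEvent a b)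
              ≤ G.prob (G.connEvent x b)) →
        (G.contract e).prob ((G.contract e).connTo v ↑A) *
            (G.contract e).prob ((G.contract e).connEvent a b)
          ≤ (G.contract e).prob ((G.contract e).connEvent v b)) :
    ∀ (V E : Type) [DecidableEq V] [Fintype E] [DecidableEq E]
      (G : PercGraph V E), G.ProbValid →
      ∀ (A : Finset V) (hA : A.Nonempty) (x₀ b : V),
      G.prob (G.connTo x₀ ↑A) * A.inf' hA (fun a => G.prob (G.connEvent a b))
        ≤ G.prob (G.connEvent x₀ b) := by
  intro V E _ _ _ G hV A hA x₀ b
  exact PercGraph.postFKG_of_gluingProperty H G hV A hA x₀ b
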